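/- In the proof of self-similarity of G^{(ℕ)} ⋊ C₂: let K be a subgroup of Ḣ = H × G^{(ℕ∖{0})}, normal in Ġ = G^{(ℕ)} ⋊ C₂, with ḟ(K) ≤ K, where ḟ(a₀,a₁,a₂,a₃,…) = (f(a₀),a₂,a₁,a₄,a₃,…) and f is core-free. Then K is contained in 1 × G^{(ℕ∖{0})}, i.e., every element of K has trivial 0-th coordinate. -/

import Mathlib

/-- The restricted direct product `G^{(ℕ)}`: finitely supported functions `ℕ → G`. -/
def restrictedProd (G : Type*) [Group G] : Subgroup (ℕ → G) where
  carrier := {g | Set.Finite {n | g n ≠ 1}}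
  one_mem' := by simp
  mul_mem' := by
    intro a b ha hb
    exact Set.Finite.subset (ha.union hb) (by
      intro n hn
      by_contra h
      simp only [Set.mem_union, Set.mem_setOf_eq, not_or, not_not] at h
      simp [Set.mem_setOf_eq, Pi.mul_apply, h.1, h.2] at hn)
  inv_mem' := by
    intro a ha
    exact ha.subset (by intro n hn; simpa using hn)

/-- The involution of `ℕ` swapping `2n ↔ 2n+1`. -/
def swapIdx (n : ℕ) : ℕ := if n % 2 = 0 then n + 1 else n - 1

lemma swapIdx_involutive : Function.Involutive swapIdx := by
  intro n
  rcases Nat.mod_two_eq_zero_or_one n with h | h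
  · have h1 : swapIdx n = n + 1 := if_pos h
    have h2 : swapIdx (n + 1) = n + 1 - 1 := if_neg (by omega)
    rw [h1, h2]; omega
  · have h1 : swapIdx n = n - 1 := if_neg (by omega)
    have h2 : swapIdx (n - 1) = n - 1 + 1 := if_pos (by omega)
    rw [h1, h2]; omega

lemma mem_restrictedProd_comp {G : Type*} [Group G] (g : ↥(restrictedProd G))
    (e : ℕ → ℕ) (he : Function.Involutive e) :
    (fun n => (g : ℕ → G) (e n)) ∈ restrictedProd G := by
  have : {n | (g : ℕ → G) (e n) ≠ 1} ⊆ e ⁻¹' {n | (g : ℕ → G) n ≠ 1} := fun n hn => hn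
  exact Set.Finite.subset (Set.Finite.preimage (Set.injOn_of_injective he.injective) g.2) this

/-- The swap automorphism of `G^{(ℕ)}` exchanging coordinates `2n ↔ 2n+1`. -/
def swapAut (G : Type*) [Group G] : MulAut ↥(restrictedProd G) where
  toFun g := ⟨fun n => (g : ℕ → G) (swapIdx n), mem_restrictedProd_comp g _ swapIdx_involutive⟩
  invFun g := ⟨fun n => (g : ℕ → G) (swapIdx n), mem_restrictedProd_comp g _ swapIdx_involutive⟩
  left_inv g := Subtype.ext (funext fun n => congrArg (g : ℕ → G) (swapIdx_involutive n))
  right_inv g := Subtype.ext (funext fun n => congrArg (g : ℕ → G) (swapIdx_involutive n))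
  map_mul' a b := rfl

lemma swapAut_sq (G : Type*) [Group G] : swapAut G * swapAut G = 1 := by
  ext g n
  exact congrArg (g : ℕ → G) (swapIdx_involutive n)

/-- The action of `C₂ = Multiplicative (ZMod 2)` on `G^{(ℕ)}` by the swap. -/
def c2Action (G : Type*) [Group G] :
    Multiplicative (ZMod 2) →* MulAut ↥(restrictedProd G) :=
  MonoidHom.mk'
    (fun x => if x.toAdd = 0 then 1 else swapAut G)
    (by
      intro a b
      have key := swapAut_sq G
      have h2 : ∀ z : ZMod 2, z = 0 ∨ z = 1 := by decide
      rcases h2 a.toAdd with ha | ha <;> rcases h2 b.toAdd with hb | hb <;>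
        simp_all [toAdd_mul, show (1 : ZMod 2) + 1 = 0 from by decide, key]
      )

variable {G : Type*} [Group G]

/-- The group `Ġ = G^{(ℕ)} ⋊ C₂`. -/
abbrev GDot (G : Type*) [Group G] :=
  SemidirectProduct ↥(restrictedProd G) (Multiplicative (ZMod 2)) (c2Action G)

/-- The subgroup `Ḣ = H × G^{(ℕ∖{0})}` of `Ġ`. -/
def HDot (H : Subgroup G) : Subgroup (GDot G) where
  carrier := {x | x.right = 1 ∧ (x.left : ℕ → G) 0 ∈ H}
  one_mem' := ⟨rfl, H.one_mem⟩
  mul_mem' := by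
    rintro a b ⟨ha1, ha2⟩ ⟨hb1, hb2⟩
    refine ⟨by simp [SemidirectProduct.mul_right, ha1, hb1], ?_⟩
    have h : (a * b).left = a.left * b.left := by
      rw [SemidirectProduct.mul_left, ha1, map_one]; rfl
    rw [h]
    exact H.mul_mem ha2 hb2
  inv_mem' := by
    rintro a ⟨ha1, ha2⟩
    refine ⟨by simp [SemidirectProduct.inv_right, ha1], ?_⟩
    have h : (a⁻¹).left = a.left⁻¹ := by
      rw [SemidirectProduct.inv_left, ha1, inv_one, map_one]; rfl
    rw [h]
    exact H.inv_mem ha2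

/-- The index recoding `0 ↦ 0`, `odd n ↦ n+1`, `even n ≥ 2 ↦ n−1`, so that
`ḟ(a₀,a₁,a₂,a₃,…) = (f(a₀),a₂,a₁,a₄,a₃,…)`. -/
def recodeIdx (n : ℕ) : ℕ := if n = 0 then 0 else if n % 2 = 1 then n + 1 else n - 1

lemma recodeIdx_involutive : Function.Involutive recodeIdx := by
  intro n
  by_cases h0 : n = 0
  · simp [recodeIdx, h0]
  rcases Nat.mod_two_eq_zero_or_one n with h | h
  · have h1 : recodeIdx n = n - 1 := by
      unfold recodeIdx; rw [if_neg h0, if_neg (by omega)]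
    have h2 : recodeIdx (n - 1) = n - 1 + 1 := by
      unfold recodeIdx; rw [if_neg (by omega), if_pos (by omega)]
    rw [h1, h2]; omega
  · have h1 : recodeIdx n = n + 1 := by
      unfold recodeIdx; rw [if_neg h0, if_pos h]
    have h2 : recodeIdx (n + 1) = n + 1 - 1 := by
      unfold recodeIdx; rw [if_neg (by omega), if_neg (by omega)]
    rw [h1, h2]; omega

lemma left_mul_of_right_one (a b : GDot G) (ha : a.right = 1) :
    (a * b).left = a.left * b.left := by
  rw [SemidirectProduct.mul_left, ha, map_one]; rfl

/-- The virtual endomorphism `ḟ : Ḣ → Ġ`,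
`ḟ(a₀,a₁,a₂,a₃,…) = (f(a₀),a₂,a₁,a₄,a₃,…)`. -/
def fDot (H : Subgroup G) (f : ↥H →* G) : ↥(HDot H) →* GDot G :=
  MonoidHom.mk'
    (fun x => SemidirectProduct.inl
      ⟨fun n => if n = 0 then f ⟨((x : GDot G).left : ℕ → G) 0, x.2.2⟩
        else ((x : GDot G).left : ℕ → G) (recodeIdx n),
       by
        refine Set.Finite.subset (Set.Finite.union (Set.finite_singleton 0)
          (Set.Finite.preimage (Set.injOn_of_injective recodeIdx_involutive.injective)
            (x : GDot G).left.2)) ?_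
        intro n hn
        by_cases h : n = 0
        · exact Or.inl h
        · refine Or.inr ?_
          simpa [h] using hn⟩)
    (by
      intro a b
      rw [← map_mul]
      apply congrArg SemidirectProduct.inl
      apply Subtype.ext
      funext n
      have hl : ((a * b : ↥(HDot H)) : GDot G).left =
          (a : GDot G).left * (b : GDot G).left :=
        left_mul_of_right_one _ _ a.2.1
      by_cases h : n = 0
      · simp only [h, if_pos rfl]
        show f _ = f _ * f _
        rw [← map_mul]
        congr 1
        apply Subtype.ext
        show ((a * b : ↥(HDot H)) : GDot G).left.1 0 = _
        rw [hl]; rfl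
      · simp only [if_neg h]
        show ((a * b : ↥(HDot H)) : GDot G).left.1 (recodeIdx n) = _
        rw [hl]
        simp only [Subgroup.coe_mul, Pi.mul_apply, if_neg h])

/-- `f : H → G` is a core-free virtual endomorphism. -/
def CoreFree {G : Type*} [Group G] (H : Subgroup G) (f : ↥H →* G) : Prop :=
  ∀ K : Subgroup G, K ≤ H → K.Normal → (∀ x : ↥H, (x : G) ∈ K → f x ∈ K) → K = ⊥

/-! The `0`-th coordinates of the elements of `K` form a subgroup `K₀ ≤ H`. It is normal in `G`,
since conjugating by the element of `G^{(ℕ)}` supported at `0` with value `g` conjugates the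
`0`-th coordinate by `g`, and it is `f`-invariant, since `ḟ` acts on the `0`-th coordinate as `f`.
As `f` is core-free, `K₀` is trivial. -/

section ZeroCoordinate

variable {Q : Type*} [Group Q] {φ : Q →* MulAut ↥(restrictedProd G)}

def restrictedProdEval (n : ℕ) : ↥(restrictedProd G) →* G :=
  (Pi.evalMonoidHom (fun _ => G) n).comp (restrictedProd G).subtype

@[simp]
lemma restrictedProdEval_apply (n : ℕ) (a : ↥(restrictedProd G)) :
    restrictedProdEval n a = (a : ℕ → G) n :=
  rfl

lemma mulSingle_mem_restrictedProd (i : ℕ) (g : G) : Pi.mulSingle i g ∈ restrictedProd G :=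
  (Set.finite_singleton i).subset fun _ hn => by_contra fun h => hn (Pi.mulSingle_eq_of_ne h _)

def zeroCoordSubgroup (K : Subgroup (↥(restrictedProd G) ⋊[φ] Q)) : Subgroup G :=
  (K.comap SemidirectProduct.inl).map (restrictedProdEval 0)

lemma mem_zeroCoordSubgroup {K : Subgroup (↥(restrictedProd G) ⋊[φ] Q)} {g : G} :
    g ∈ zeroCoordSubgroup K ↔
      ∃ a : ↥(restrictedProd G), SemidirectProduct.inl a ∈ K ∧ (a : ℕ → G) 0 = g :=
  Iff.rfl

lemma left_zero_mem_zeroCoordSubgroup {K : Subgroup (↥(restrictedProd G) ⋊[φ] Q)}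
    {x : ↥(restrictedProd G) ⋊[φ] Q} (hx : x ∈ K) (hx1 : x.right = 1) :
    (x.left : ℕ → G) 0 ∈ zeroCoordSubgroup K := by
  have hx_inl : SemidirectProduct.inl x.left = x := by
    simpa [hx1] using SemidirectProduct.inl_left_mul_inr_right x
  exact mem_zeroCoordSubgroup.2 ⟨x.left, hx_inl ▸ hx, rfl⟩

instance zeroCoordSubgroup_normal {K : Subgroup (↥(restrictedProd G) ⋊[φ] Q)} [hN : K.Normal] :
    (zeroCoordSubgroup K).Normal where
  conj_mem := by
    rintro _ ⟨a, ha, rfl⟩ g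
    let δ : ↥(restrictedProd G) := ⟨Pi.mulSingle 0 g, mulSingle_mem_restrictedProd 0 g⟩
    refine ⟨δ * a * δ⁻¹, ?_, by simp [δ]⟩
    show SemidirectProduct.inl (δ * a * δ⁻¹) ∈ K
    simpa only [map_mul, map_inv] using hN.conj_mem _ ha (.inl δ)

lemma zeroCoordSubgroup_le {H : Subgroup G} {K : Subgroup (GDot G)} (hKH : K ≤ HDot H) :
    zeroCoordSubgroup K ≤ H := by
  rintro _ ⟨a, ha, rfl⟩
  exact (hKH ha).2

end ZeroCoordinate

section FDot

variable {H : Subgroup G} {f : ↥H →* G}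

@[simp]
lemma fDot_right (x : ↥(HDot H)) : (fDot H f x).right = 1 :=
  rfl

@[simp]
lemma fDot_left_zero (x : ↥(HDot H)) :
    ((fDot H f x).left : ℕ → G) 0 = f ⟨((x : GDot G).left : ℕ → G) 0, x.2.2⟩ := by
  simp [fDot]

lemma map_mem_zeroCoordSubgroup_of_fDot_invariant {K : Subgroup (GDot G)} (hKH : K ≤ HDot H)
    (hinv : ∀ x : ↥(HDot H), (x : GDot G) ∈ K → fDot H f x ∈ K) (y : ↥H)
    (hy : (y : G) ∈ zeroCoordSubgroup K) : f y ∈ zeroCoordSubgroup K := by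
  obtain ⟨a, ha, hay⟩ := mem_zeroCoordSubgroup.1 hy
  have hfa := left_zero_mem_zeroCoordSubgroup (hinv ⟨_, hKH ha⟩ ha) (fDot_right _)
  rw [fDot_left_zero] at hfa
  convert hfa using 2
  exact Subtype.ext hay.symm

end FDot

theorem fDot_invariant_subgroup_in_base_general (H : Subgroup G) (f : ↥H →* G)
    (hf : CoreFree H f) (K : Subgroup (GDot G)) (hKH : K ≤ HDot H) (hN : K.Normal)
    (hinv : ∀ x : ↥(HDot H), (x : GDot G) ∈ K → fDot H f x ∈ K) :
    ∀ x ∈ K, x.right = 1 ∧ (x.left : ℕ → G) 0 = 1 := by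
  have hbot : zeroCoordSubgroup K = ⊥ :=
    hf _ (zeroCoordSubgroup_le hKH) inferInstance
      (map_mem_zeroCoordSubgroup_of_fDot_invariant hKH hinv)
  intro x hx
  have hx1 : x.right = 1 := (hKH hx).1
  exact ⟨hx1, by simpa [hbot] using left_zero_mem_zeroCoordSubgroup hx hx1⟩

/-- if `K ≤ Ḣ` is normal in `Ġ = G^{(ℕ)} ⋊ C₂` and `ḟ`-invariant, with `f`
core-free, then `K ≤ 1 × G^{(ℕ∖{0})}`: every element of `K` lies in the base group and
has trivial 0-th coordinate. -/
theorem fDot_invariant_subgroup_in_base (H : Subgroup G) [H.FiniteIndex] (f : ↥H →* G)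
    (hf : CoreFree H f) (K : Subgroup (GDot G)) (hKH : K ≤ HDot H) (hN : K.Normal)
    (hinv : ∀ x : ↥(HDot H), (x : GDot G) ∈ K → fDot H f x ∈ K) :
    ∀ x ∈ K, x.right = 1 ∧ (x.left : ℕ → G) 0 = 1 :=
  fDot_invariant_subgroup_in_base_general H f hf K hKH hN hinv
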